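/- Let B be a strongly E-Birkhoff Galois structure on a Barr exact category C, and assume the level-one Galois structure exists: the full subcategory Cov(C) of Ext(C) determined by the coverings is reflective with reflector F₁ and unit η¹, each unit component η¹_f : f → F₁(f) is a double extension, and this reflection is strongly E₂-Birkhoff. Let τ be a double extension which is symmetrically trivial: there is a discrete fibration τ → β whose codomain β is a double extension all four of whose vertices are objects of B. Then τ, regarded as a morphism of Ext(C) in either of the two possible directions, is a trivial double covering. -/

import Mathlib

open CategoryTheory CategoryTheory.Limits

universe v u

namespace Paper

variable {C : Type u} [Category.{v} C]

/-- `f` is a regular epimorphism. -/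
def IsRegEpi {X Y : C} (f : X ⟶ Y) : Prop := Nonempty (RegularEpi f)

/-- A regular category: a finitely complete category with coequalizers of kernel pairs in
which regular epimorphisms are stable under pullback. -/
class RegularCat (C : Type u) [Category.{v} C] [HasFiniteLimits C] : Prop where
  hasCoeqOfKernelPairs : ∀ {X Y : C} (f : X ⟶ Y),
    HasCoequalizer (pullback.fst f f) (pullback.snd f f)
  regEpiPullbackStable : ∀ {X Y Z : C} (f : X ⟶ Y) (g : Z ⟶ Y),
    IsRegEpi f → IsRegEpi (pullback.snd f g)

/-- An internal equivalence relation given by a parallel pair `r₁ r₂ : R ⟶ X`. -/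
structure IsEquivRel [HasFiniteLimits C] {R X : C} (r₁ r₂ : R ⟶ X) : Prop where
  jointlyMono : Mono (prod.lift r₁ r₂)
  refl : ∃ d : X ⟶ R, d ≫ r₁ = 𝟙 X ∧ d ≫ r₂ = 𝟙 X
  symm : ∃ s : R ⟶ R, s ≫ r₁ = r₂ ∧ s ≫ r₂ = r₁
  trans : ∃ t : pullback r₂ r₁ ⟶ R,
    t ≫ r₁ = pullback.fst r₂ r₁ ≫ r₁ ∧ t ≫ r₂ = pullback.snd r₂ r₁ ≫ r₂

/-- A Barr exact category: a regular category in which every internal equivalence relation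
is effective (i.e. is a kernel pair). -/
class BarrExact (C : Type u) [Category.{v} C] [HasFiniteLimits C] extends RegularCat C : Prop where
  equivRelEffective : ∀ {R X : C} (r₁ r₂ : R ⟶ X), IsEquivRel r₁ r₂ →
    ∃ (Y : C) (f : X ⟶ Y), IsKernelPair f r₁ r₂

section DoubleExt
variable [HasFiniteLimits C]

/-- A double extension: a commutative square `αt ≫ fB = fA ≫ αb` of regular epimorphisms
whose comparison morphism to the pullback is also a regular epimorphism. -/
structure IsDoubleExt {A₁ A₀ B₁ B₀ : C} (fA : A₁ ⟶ A₀) (fB : B₁ ⟶ B₀)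
    (αt : A₁ ⟶ B₁) (αb : A₀ ⟶ B₀) : Prop where
  w : αt ≫ fB = fA ≫ αb
  left : IsRegEpi fA
  right : IsRegEpi fB
  top : IsRegEpi αt
  bot : IsRegEpi αb
  comparison : IsRegEpi (pullback.lift fA αt w.symm : A₁ ⟶ pullback αb fB)

end DoubleExt

/-- The category `Ext C` of extensions: the full subcategory of the arrow category of `C`
determined by the regular epimorphisms. -/
abbrev ExtCat (C : Type u) [Category.{v} C] : Type max u v :=
  ObjectProperty.FullSubcategory (fun f : Arrow C => IsRegEpi f.hom)

/-- An object of `Ext C` from a regular epimorphism. -/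
def ExtCat.mk' {X Y : C} (f : X ⟶ Y) (hf : IsRegEpi f) : ExtCat C :=
  ⟨Arrow.mk f, hf⟩

/-- The top (domain) component of a morphism of `Ext C`. -/
def ExtCat.homLeft {f g : ExtCat C} (φ : f ⟶ g) : f.obj.left ⟶ g.obj.left :=
  CommaMorphism.left φ.hom

/-- The bottom (codomain) component of a morphism of `Ext C`. -/
def ExtCat.homRight {f g : ExtCat C} (φ : f ⟶ g) : f.obj.right ⟶ g.obj.right :=
  CommaMorphism.right φ.hom

lemma ExtCat.homLeft_comp {f g h : ExtCat C} (a : f ⟶ g) (b : g ⟶ h) :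
    ExtCat.homLeft (a ≫ b) = ExtCat.homLeft a ≫ ExtCat.homLeft b := rfl

lemma ExtCat.homRight_comp {f g h : ExtCat C} (a : f ⟶ g) (b : g ⟶ h) :
    ExtCat.homRight (a ≫ b) = ExtCat.homRight a ≫ ExtCat.homRight b := rfl

lemma ExtCat.hom_w {f g : ExtCat C} (φ : f ⟶ g) :
    ExtCat.homLeft φ ≫ g.obj.hom = f.obj.hom ≫ ExtCat.homRight φ :=
  CommaMorphism.w φ.hom

/-- A morphism of `Ext C` from a commutative square in `C`. -/
def ExtCat.homMk' {X₁ X₀ Y₁ Y₀ : C} {f : X₁ ⟶ X₀} {g : Y₁ ⟶ Y₀}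
    {hf : IsRegEpi f} {hg : IsRegEpi g}
    (u : X₁ ⟶ Y₁) (v : X₀ ⟶ Y₀) (w : u ≫ g = f ≫ v) :
    ExtCat.mk' f hf ⟶ ExtCat.mk' g hg :=
  ObjectProperty.homMk (Arrow.homMk (u := u) (v := v) w)

/-- A (commutative) square in `C`, with left vertical `left : A₁ ⟶ A₀`, right vertical
`right : B₁ ⟶ B₀`, top horizontal `top : A₁ ⟶ B₁` and bottom horizontal `bot : A₀ ⟶ B₀`. -/
structure Sq (C : Type u) [Category.{v} C] where
  A₁ : C
  A₀ : C
  B₁ : C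
  B₀ : C
  left : A₁ ⟶ A₀
  right : B₁ ⟶ B₀
  top : A₁ ⟶ B₁
  bot : A₀ ⟶ B₀
  w : top ≫ right = left ≫ bot

/-- The square is a double extension. -/
def Sq.IsDE [HasFiniteLimits C] (s : Sq C) : Prop :=
  IsDoubleExt s.left s.right s.top s.bot

/-- A commutative cube, presented as a morphism of squares `Φ : s ⟶ t`. -/
structure SqHom (s t : Sq C) where
  h₁₁ : s.A₁ ⟶ t.A₁
  h₁₀ : s.A₀ ⟶ t.A₀
  h₀₁ : s.B₁ ⟶ t.B₁
  h₀₀ : s.B₀ ⟶ t.B₀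
  wA : h₁₁ ≫ t.left = s.left ≫ h₁₀
  wB : h₀₁ ≫ t.right = s.right ≫ h₀₀
  wt : h₁₁ ≫ t.top = s.top ≫ h₀₁
  wb : h₁₀ ≫ t.bot = s.bot ≫ h₀₀

/-- Composition of cubes (as morphisms of squares). -/
def SqHom.comp {s t u : Sq C} (Φ : SqHom s t) (Ψ : SqHom t u) : SqHom s u where
  h₁₁ := Φ.h₁₁ ≫ Ψ.h₁₁
  h₁₀ := Φ.h₁₀ ≫ Ψ.h₁₀
  h₀₁ := Φ.h₀₁ ≫ Ψ.h₀₁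
  h₀₀ := Φ.h₀₀ ≫ Ψ.h₀₀
  wA := by rw [Category.assoc, Ψ.wA, ← Category.assoc, Φ.wA, Category.assoc]
  wB := by rw [Category.assoc, Ψ.wB, ← Category.assoc, Φ.wB, Category.assoc]
  wt := by rw [Category.assoc, Ψ.wt, ← Category.assoc, Φ.wt, Category.assoc]
  wb := by rw [Category.assoc, Ψ.wb, ← Category.assoc, Φ.wb, Category.assoc]

section Cube
variable [HasFiniteLimits C]

/-- Seen as a morphism `(σ, β) : s ⟶ t` between the double extensions `s` (as the arrow
`s.left → s.right`) and `t`, the face `σ` of the cube: the square from `s.left` to `t.left`. -/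
def SqHom.sigmaSq {s t : Sq C} (Φ : SqHom s t) : Sq C where
  A₁ := s.A₁
  A₀ := s.A₀
  B₁ := t.A₁
  B₀ := t.A₀
  left := s.left
  right := t.left
  top := Φ.h₁₁
  bot := Φ.h₁₀
  w := Φ.wA

/-- The face `β` of the cube: the square from `s.right` to `t.right`. -/
def SqHom.betaSq {s t : Sq C} (Φ : SqHom s t) : Sq C where
  A₁ := s.B₁
  A₀ := s.B₀
  B₁ := t.B₁
  B₀ := t.B₀
  left := s.right
  right := t.right
  top := Φ.h₀₁
  bot := Φ.h₀₀
  w := Φ.wB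

/-- Top component of the componentwise pullback of `t` (i.e. `α`) and `betaSq Φ` (i.e. `β`). -/
noncomputable def SqHom.P₁ {s t : Sq C} (Φ : SqHom s t) : C := pullback t.top Φ.h₀₁

/-- Bottom component of the componentwise pullback of `α` and `β`. -/
noncomputable def SqHom.P₀ {s t : Sq C} (Φ : SqHom s t) : C := pullback t.bot Φ.h₀₀

/-- The induced arrow between the components of the componentwise pullback of `α` and `β`. -/
noncomputable def SqHom.fP {s t : Sq C} (Φ : SqHom s t) : Φ.P₁ ⟶ Φ.P₀ :=
  pullback.map t.top Φ.h₀₁ t.bot Φ.h₀₀ t.left s.right t.right t.w Φ.wB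

/-- The top comparison morphism. -/
noncomputable def SqHom.c₁ {s t : Sq C} (Φ : SqHom s t) : s.A₁ ⟶ Φ.P₁ :=
  pullback.lift Φ.h₁₁ s.top Φ.wt

/-- The bottom comparison morphism. -/
noncomputable def SqHom.c₀ {s t : Sq C} (Φ : SqHom s t) : s.A₀ ⟶ Φ.P₀ :=
  pullback.lift Φ.h₁₀ s.bot Φ.wb

lemma SqHom.comp_w {s t : Sq C} (Φ : SqHom s t) : Φ.c₁ ≫ Φ.fP = s.left ≫ Φ.c₀ := by
  change pullback.lift Φ.h₁₁ s.top Φ.wt ≫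
      pullback.map t.top Φ.h₀₁ t.bot Φ.h₀₀ t.left s.right t.right t.w Φ.wB =
    s.left ≫ pullback.lift Φ.h₁₀ s.bot Φ.wb
  apply pullback.hom_ext
  · simp [Φ.wA, pullback.lift_fst, pullback.lift_fst_assoc]
  · simp [s.w, pullback.lift_snd, pullback.lift_snd_assoc]

/-- The comparison square of the cube `Φ`, from `s.left` to the componentwise pullback
of `α` and `β`. -/
noncomputable def SqHom.compSq {s t : Sq C} (Φ : SqHom s t) : Sq C where
  A₁ := s.A₁
  A₀ := s.A₀
  B₁ := Φ.P₁
  B₀ := Φ.P₀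
  left := s.left
  right := Φ.fP
  top := Φ.c₁
  bot := Φ.c₀
  w := Φ.comp_w

/-- A `3`-cubical extension: the two opposite faces `γ = s` and `α = t`, the two connecting
faces `σ` and `β`, and the comparison square to the componentwise pullback of `α` and `β`
are all double extensions. -/
def SqHom.Is3CubExt {s t : Sq C} (Φ : SqHom s t) : Prop :=
  s.IsDE ∧ t.IsDE ∧ Φ.sigmaSq.IsDE ∧ Φ.betaSq.IsDE ∧ Φ.compSq.IsDE

end Cube

/-- The cube `Φ : s ⟶ t` is a limit cube: the cone from the initial vertex `s.A₁` on the
diagram formed by the remaining seven vertices is a limit cone. -/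
def SqHom.IsLimitCube {s t : Sq C} (Φ : SqHom s t) : Prop :=
  ∀ (W : C) (wA₀ : W ⟶ s.A₀) (wB₁ : W ⟶ s.B₁) (wtA₁ : W ⟶ t.A₁),
    wA₀ ≫ s.bot = wB₁ ≫ s.right →
    wA₀ ≫ Φ.h₁₀ = wtA₁ ≫ t.left →
    wB₁ ≫ Φ.h₀₁ = wtA₁ ≫ t.top →
    ∃! u : W ⟶ s.A₁, u ≫ s.left = wA₀ ∧ u ≫ s.top = wB₁ ∧ u ≫ Φ.h₁₁ = wtA₁

/-- A discrete fibration (of order 3): a `3`-cubical extension which is a limit cube. -/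
def SqHom.IsDiscFib [HasFiniteLimits C] {s t : Sq C} (Φ : SqHom s t) : Prop :=
  Φ.Is3CubExt ∧ Φ.IsLimitCube
section Galois
variable [HasFiniteLimits C]

/-- A strongly E-Birkhoff Galois structure on `C`: a full replete reflective subcategory
(given by the predicate `inB`, the reflector `F` and the unit `η`) such that every unit
component is a regular epimorphism and every naturality square of the unit at a regular
epimorphism is a double extension. -/
structure BirkhoffStructure (C : Type u) [Category.{v} C] [HasFiniteLimits C] where
  inB : C → Prop
  replete : ∀ {X Y : C}, inB X → (X ≅ Y) → inB Y
  F : C ⥤ C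
  η : 𝟭 C ⟶ F
  obj_inB : ∀ A : C, inB (F.obj A)
  unit_regEpi : ∀ A : C, IsRegEpi (η.app A)
  univ : ∀ {A X : C}, inB X → ∀ g : A ⟶ X, ∃! h : F.obj A ⟶ X, η.app A ≫ h = g
  stronglyBirkhoff : ∀ {A B : C} (f : A ⟶ B), IsRegEpi f →
    IsDoubleExt f (F.map f) (η.app A) (η.app B)

/-- A trivial covering: a regular epimorphism whose unit naturality square is a pullback. -/
def TrivialCovering (G : BirkhoffStructure C) {T E : C} (t : T ⟶ E) : Prop :=
  IsRegEpi t ∧ IsPullback (G.η.app T) t (G.F.map t) (G.η.app E)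

/-- A covering: a regular epimorphism whose pullback along some regular epimorphism is a
trivial covering. -/
def Covering (G : BirkhoffStructure C) {A B : C} (c : A ⟶ B) : Prop :=
  IsRegEpi c ∧ ∃ (E : C) (e : E ⟶ B), IsRegEpi e ∧ TrivialCovering G (pullback.snd c e)

end Galois

/-- The underlying square in `C` of a morphism of `Ext C`. -/
def sqOfHom {f g : ExtCat C} (φ : f ⟶ g) : Sq C where
  A₁ := f.obj.left
  A₀ := f.obj.right
  B₁ := g.obj.left
  B₀ := g.obj.right
  left := f.obj.hom
  right := g.obj.hom
  top := ExtCat.homLeft φ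
  bot := ExtCat.homRight φ
  w := ExtCat.hom_w φ

/-- The underlying cube in `C` of a naturality square in `Ext C` of a natural
transformation `η₁ : 𝟭 (Ext C) ⟶ F₁` at a morphism `φ : f ⟶ g` of `Ext C`. -/
def natCube (F₁ : ExtCat C ⥤ ExtCat C) (η₁ : 𝟭 (ExtCat C) ⟶ F₁) {f g : ExtCat C}
    (φ : f ⟶ g) : SqHom (sqOfHom φ) (sqOfHom (F₁.map φ)) where
  h₁₁ := ExtCat.homLeft (η₁.app f)
  h₁₀ := ExtCat.homRight (η₁.app f)
  h₀₁ := ExtCat.homLeft (η₁.app g)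
  h₀₀ := ExtCat.homRight (η₁.app g)
  wA := ExtCat.hom_w (η₁.app f)
  wB := ExtCat.hom_w (η₁.app g)
  wt := by
    have h := congrArg ExtCat.homLeft (η₁.naturality φ)
    rw [ExtCat.homLeft_comp, ExtCat.homLeft_comp] at h
    exact h.symm
  wb := by
    have h := congrArg ExtCat.homRight (η₁.naturality φ)
    rw [ExtCat.homRight_comp, ExtCat.homRight_comp] at h
    exact h.symm

section LevelOne
variable [HasFiniteLimits C]

/-- The level-one Galois structure induced by a strongly E-Birkhoff Galois structure `G`:
the coverings form a reflective subcategory of `Ext C`, with reflector `F₁` and unit `η₁`,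
every unit component is a double extension, and the reflection is strongly E₂-Birkhoff. -/
structure LevelOne (G : BirkhoffStructure C) where
  F₁ : ExtCat C ⥤ ExtCat C
  η₁ : 𝟭 (ExtCat C) ⟶ F₁
  obj_cov : ∀ f : ExtCat C, Covering G (F₁.obj f).obj.hom
  univ : ∀ {f x : ExtCat C}, Covering G x.obj.hom → ∀ g : f ⟶ x,
    ∃! h : F₁.obj f ⟶ x, η₁.app f ≫ h = g
  unit_DE : ∀ f : ExtCat C, (sqOfHom (η₁.app f)).IsDE
  stronglyBirkhoff : ∀ {f g : ExtCat C} (φ : f ⟶ g), (sqOfHom φ).IsDE →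
    (natCube F₁ η₁ φ).Is3CubExt

/-- A trivial double covering: a morphism of `Ext C` whose underlying square is a double
extension and whose `η₁`-naturality square is a pullback in `Ext C`. -/
def TrivDoubleCov {G : BirkhoffStructure C} (L : LevelOne G) {f g : ExtCat C}
    (φ : f ⟶ g) : Prop :=
  (sqOfHom φ).IsDE ∧ IsPullback (L.η₁.app f) φ (L.F₁.map φ) (L.η₁.app g)

/-- A double covering: a double extension `α : d ⟶ c` in `Ext C` such that the pullback of
`α` along some double extension `γ : e ⟶ c` is a trivial double covering. -/
def DoubleCov {G : BirkhoffStructure C} (L : LevelOne G) {d c : ExtCat C}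
    (α : d ⟶ c) : Prop :=
  (sqOfHom α).IsDE ∧ ∃ (e : ExtCat C) (γ : e ⟶ c), (sqOfHom γ).IsDE ∧
    ∃ (p : ExtCat C) (pγ : p ⟶ e) (pα : p ⟶ d),
      IsPullback pγ pα γ α ∧ TrivDoubleCov L pγ

end LevelOne

/-!
The `η₁`-naturality cube at a double extension `φ : f ⟶ g` of `Ext C` is a 3-cubical extension,
so its comparison maps `c₁`, `c₀` into the componentwise pullback are regular epimorphisms. The
codomain part of `η₁` is invertible (identities are coverings), so `c₀` is split monic, hence
invertible. If `f.hom`, `φ.left` and `σ.left` are jointly monic for some `σ : f ⟶ x` into a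
covering `x`, then `c₁` is monic, because `σ` factors through `η₁`; so `c₁` is invertible too and
the naturality square is a pullback in `Ext C`.

For `τ`, take as `σ` the face of the discrete fibration `τ ⟶ β` in the chosen direction: `β.left`
and `β.top` are even trivial coverings, all their vertices lying in `B`, and the joint monicity is
the uniqueness in the limit-cube property.
-/

lemma isRegEpi_iff_isRegularEpi {X Y : C} (f : X ⟶ Y) : IsRegEpi f ↔ IsRegularEpi f :=
  ⟨fun h => ⟨h⟩, fun h => h.1⟩

lemma IsRegEpi.of_isIso {X Y : C} (f : X ⟶ Y) [IsIso f] : IsRegEpi f :=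
  ⟨RegularEpi.ofIso (asIso f)⟩

lemma IsRegEpi.isIso_comp {X Y Z : C} (j : X ⟶ Y) [IsIso j] {e : Y ⟶ Z} (he : IsRegEpi e) :
    IsRegEpi (j ≫ e) := by
  rw [isRegEpi_iff_isRegularEpi] at he ⊢
  exact MorphismProperty.RespectsIso.precomp (MorphismProperty.regularEpi C) j e he

lemma IsRegEpi.comp_isIso {X Y Z : C} {e : X ⟶ Y} (he : IsRegEpi e) (j : Y ⟶ Z) [IsIso j] :
    IsRegEpi (e ≫ j) := by
  rw [isRegEpi_iff_isRegularEpi] at he ⊢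
  exact MorphismProperty.RespectsIso.postcomp (MorphismProperty.regularEpi C) j e he

lemma IsRegEpi.isIso_of_mono {X Y : C} {f : X ⟶ Y} (h : IsRegEpi f) [Mono f] : IsIso f :=
  isIso_of_regularEpi_of_mono f h.some

lemma IsRegEpi.isIso_of_comp_eq_id {X Y : C} {f : X ⟶ Y} (h : IsRegEpi f) {r : Y ⟶ X}
    (hr : f ≫ r = 𝟙 X) : IsIso f :=
  haveI : Epi f := h.some.epi
  haveI : IsSplitMono f := ⟨⟨⟨r, hr⟩⟩⟩
  isIso_of_epi_of_isSplitMono f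

namespace ExtCat

def homMk {f g : ExtCat C} (u : f.obj.left ⟶ g.obj.left) (v : f.obj.right ⟶ g.obj.right)
    (w : u ≫ g.obj.hom = f.obj.hom ≫ v) : f ⟶ g :=
  ObjectProperty.homMk (Arrow.homMk (u := u) (v := v) w)

@[simp]
lemma homLeft_homMk {f g : ExtCat C} (u : f.obj.left ⟶ g.obj.left)
    (v : f.obj.right ⟶ g.obj.right) (w : u ≫ g.obj.hom = f.obj.hom ≫ v) :
    homLeft (homMk u v w) = u := rfl

@[simp]
lemma homRight_homMk {f g : ExtCat C} (u : f.obj.left ⟶ g.obj.left)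
    (v : f.obj.right ⟶ g.obj.right) (w : u ≫ g.obj.hom = f.obj.hom ≫ v) :
    homRight (homMk u v w) = v := rfl

@[ext]
lemma hom_ext {f g : ExtCat C} {a b : f ⟶ g} (h₁ : homLeft a = homLeft b)
    (h₂ : homRight a = homRight b) : a = b :=
  ObjectProperty.hom_ext _ (CommaMorphism.ext h₁ h₂)

lemma isPullback_of_isPullback_homLeft_homRight {P X Y Z : ExtCat C} {fst : P ⟶ X}
    {snd : P ⟶ Y} {f : X ⟶ Z} {g : Y ⟶ Z} (w : fst ≫ f = snd ≫ g)
    (hl : IsPullback (homLeft fst) (homLeft snd) (homLeft f) (homLeft g))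
    (hr : IsPullback (homRight fst) (homRight snd) (homRight f) (homRight g)) :
    IsPullback fst snd f g := by
  refine .of_isLimit (PullbackCone.IsLimit.mk w
    (fun s => homMk
      (hl.lift (homLeft s.fst) (homLeft s.snd)
        (by rw [← homLeft_comp, ← homLeft_comp, s.condition]))
      (hr.lift (homRight s.fst) (homRight s.snd)
        (by rw [← homRight_comp, ← homRight_comp, s.condition]))
      (hr.hom_ext ?_ ?_))
    (fun s => ?_) (fun s => ?_) (fun s m hm₁ hm₂ => ?_))
  · simp only [Category.assoc, ← hom_w, IsPullback.lift_fst, IsPullback.lift_fst_assoc]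
  · simp only [Category.assoc, ← hom_w, IsPullback.lift_snd, IsPullback.lift_snd_assoc]
  · ext <;> simp [homLeft_comp, homRight_comp]
  · ext <;> simp [homLeft_comp, homRight_comp]
  · ext
    · exact hl.hom_ext (by simp [← homLeft_comp, hm₁]) (by simp [← homLeft_comp, hm₂])
    · exact hr.hom_ext (by simp [← homRight_comp, hm₁]) (by simp [← homRight_comp, hm₂])

end ExtCat

lemma SqHom.IsLimitCube.ext {s t : Sq C} {Φ : SqHom s t} (hΦ : Φ.IsLimitCube) {W : C}
    {a b : W ⟶ s.A₁} (hl : a ≫ s.left = b ≫ s.left) (ht : a ≫ s.top = b ≫ s.top)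
    (hh : a ≫ Φ.h₁₁ = b ≫ Φ.h₁₁) : a = b := by
  obtain ⟨u, -, huniq⟩ := hΦ W (b ≫ s.left) (b ≫ s.top) (b ≫ Φ.h₁₁)
    (by simp [s.w]) (by simp [Φ.wA]) (by simp [Φ.wt])
  exact (huniq a ⟨hl, ht, hh⟩).trans (huniq b ⟨rfl, rfl, rfl⟩).symm

section FiniteLimits

variable [HasFiniteLimits C]

lemma IsDoubleExt.transpose {A₁ A₀ B₁ B₀ : C} {fA : A₁ ⟶ A₀} {fB : B₁ ⟶ B₀}
    {αt : A₁ ⟶ B₁} {αb : A₀ ⟶ B₀} (h : IsDoubleExt fA fB αt αb) :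
    IsDoubleExt αt αb fA fB := by
  refine ⟨h.w.symm, h.top, h.bot, h.left, h.right, ?_⟩
  have hlift : pullback.lift αt fA h.w =
      pullback.lift fA αt h.w.symm ≫ (pullbackSymmetry αb fB).hom := by
    apply pullback.hom_ext
    · rw [Category.assoc, pullbackSymmetry_hom_comp_fst]
      exact (pullback.lift_fst _ _ _).trans (pullback.lift_snd _ _ _).symm
    · rw [Category.assoc, pullbackSymmetry_hom_comp_snd]
      exact (pullback.lift_snd _ _ _).trans (pullback.lift_fst _ _ _).symm
  rw [hlift]
  exact h.comparison.comp_isIso _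

namespace BirkhoffStructure

variable (G : BirkhoffStructure C)

lemma isIso_η_app_of_inB {X : C} (hX : G.inB X) : IsIso (G.η.app X) := by
  obtain ⟨r, hr, -⟩ := G.univ hX (𝟙 X)
  exact (G.unit_regEpi X).isIso_of_comp_eq_id hr

lemma trivialCovering_of_isIso {X Y : C} (j : X ⟶ Y) [IsIso j] : TrivialCovering G j :=
  ⟨.of_isIso j, .of_vert_isIso ⟨(G.η.naturality j).symm⟩⟩

lemma trivialCovering_of_inB {X Y : C} {t : X ⟶ Y} (hX : G.inB X) (hY : G.inB Y)
    (ht : IsRegEpi t) : TrivialCovering G t :=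
  haveI := G.isIso_η_app_of_inB hX
  haveI := G.isIso_η_app_of_inB hY
  ⟨ht, .of_horiz_isIso ⟨(G.η.naturality t).symm⟩⟩

end BirkhoffStructure

lemma TrivialCovering.isIso_comp {G : BirkhoffStructure C} {P X Y : C} (j : P ⟶ X) [IsIso j]
    {t : X ⟶ Y} (h : TrivialCovering G t) : TrivialCovering G (j ≫ t) := by
  refine ⟨h.1.isIso_comp j, ?_⟩
  rw [G.F.map_comp]
  exact (G.trivialCovering_of_isIso j).2.paste_vert h.2

lemma TrivialCovering.covering {G : BirkhoffStructure C} {X Y : C} {t : X ⟶ Y}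
    (h : TrivialCovering G t) : Covering G t := by
  refine ⟨h.1, Y, 𝟙 Y, .of_isIso _, ?_⟩
  have hsnd : pullback.fst t (𝟙 Y) ≫ t = pullback.snd t (𝟙 Y) := by
    simpa using pullback.condition (f := t) (g := 𝟙 Y)
  rw [← hsnd]
  exact h.isIso_comp _

lemma BirkhoffStructure.covering_of_inB (G : BirkhoffStructure C) {X Y : C} {t : X ⟶ Y}
    (hX : G.inB X) (hY : G.inB Y) (ht : IsRegEpi t) : Covering G t :=
  (G.trivialCovering_of_inB hX hY ht).covering

namespace SqHom

variable {s t : Sq C} (Φ : SqHom s t)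

lemma c₁_fst : Φ.c₁ ≫ pullback.fst t.top Φ.h₀₁ = Φ.h₁₁ := pullback.lift_fst _ _ _

lemma c₁_snd : Φ.c₁ ≫ pullback.snd t.top Φ.h₀₁ = s.top := pullback.lift_snd _ _ _

lemma c₀_fst : Φ.c₀ ≫ pullback.fst t.bot Φ.h₀₀ = Φ.h₁₀ := pullback.lift_fst _ _ _

lemma c₀_snd : Φ.c₀ ≫ pullback.snd t.bot Φ.h₀₀ = s.bot := pullback.lift_snd _ _ _

lemma isPullback_top_of_isIso_c₁ [IsIso Φ.c₁] : IsPullback Φ.h₁₁ s.top t.top Φ.h₀₁ :=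
  let i := asIso Φ.c₁
  .of_iso_pullback ⟨Φ.wt⟩ i Φ.c₁_fst Φ.c₁_snd

lemma isPullback_bot_of_isIso_c₀ [IsIso Φ.c₀] : IsPullback Φ.h₁₀ s.bot t.bot Φ.h₀₀ :=
  let i := asIso Φ.c₀
  .of_iso_pullback ⟨Φ.wb⟩ i Φ.c₀_fst Φ.c₀_snd

lemma isIso_c₀_of_isIso_h₁₀ (hc : IsRegEpi Φ.c₀) [IsIso Φ.h₁₀] : IsIso Φ.c₀ :=
  hc.isIso_of_comp_eq_id (r := pullback.fst t.bot Φ.h₀₀ ≫ inv Φ.h₁₀)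
    ((Category.assoc _ _ _).symm.trans ((Φ.c₀_fst =≫ inv Φ.h₁₀).trans (IsIso.hom_inv_id _)))

lemma mono_c₁ (h : ∀ {W : C} (a b : W ⟶ s.A₁),
      a ≫ Φ.h₁₁ = b ≫ Φ.h₁₁ → a ≫ s.top = b ≫ s.top → a = b) :
    Mono Φ.c₁ :=
  ⟨fun a b hab => h a b
    (by
      rw [← Φ.c₁_fst]
      exact (Category.assoc _ _ _).symm.trans
        ((hab =≫ pullback.fst t.top Φ.h₀₁).trans (Category.assoc _ _ _)))
    (by
      rw [← Φ.c₁_snd]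
      exact (Category.assoc _ _ _).symm.trans
        ((hab =≫ pullback.snd t.top Φ.h₀₁).trans (Category.assoc _ _ _)))⟩

end SqHom

namespace LevelOne

variable {G : BirkhoffStructure C} (L : LevelOne G)

-- The morphism `f ⟶ 𝟙 f.right` into the covering `𝟙 f.right` factors through the unit.
lemma isIso_homRight_η₁_app (f : ExtCat C) : IsIso (ExtCat.homRight (L.η₁.app f)) := by
  obtain ⟨r, hr, -⟩ := L.univ (x := ExtCat.mk' (𝟙 f.obj.right) (.of_isIso _))
    (G.trivialCovering_of_isIso (𝟙 f.obj.right)).covering (ExtCat.homMk f.obj.hom (𝟙 _) rfl)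
  exact (L.unit_DE f).bot.isIso_of_comp_eq_id (congrArg ExtCat.homRight hr)

lemma trivDoubleCov_of_jointly_mono {f g x : ExtCat C} (φ : f ⟶ g) (hφ : (sqOfHom φ).IsDE)
    (hx : Covering G x.obj.hom) (σ : f ⟶ x)
    (hσ : ∀ {W : C} (a b : W ⟶ f.obj.left), a ≫ f.obj.hom = b ≫ f.obj.hom →
      a ≫ ExtCat.homLeft φ = b ≫ ExtCat.homLeft φ →
      a ≫ ExtCat.homLeft σ = b ≫ ExtCat.homLeft σ → a = b) :
    TrivDoubleCov L φ := by
  set Ψ := natCube L.F₁ L.η₁ φ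
  have hcomp : Ψ.compSq.IsDE := (L.stronglyBirkhoff φ hφ).2.2.2.2
  have hc₁ : IsRegEpi Ψ.c₁ := hcomp.top
  have hc₀ : IsRegEpi Ψ.c₀ := hcomp.bot
  have hη₁ := L.isIso_homRight_η₁_app f
  have : IsIso Ψ.h₁₀ := hη₁
  have : IsIso Ψ.c₀ := Ψ.isIso_c₀_of_isIso_h₁₀ hc₀
  obtain ⟨r, rfl, -⟩ := L.univ hx σ
  have hf : f.obj.hom = ExtCat.homLeft (L.η₁.app f) ≫ (L.F₁.obj f).obj.hom ≫
      inv (ExtCat.homRight (L.η₁.app f)) := by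
    rw [← Category.assoc, ExtCat.hom_w (L.η₁.app f)]
    simp
  have : Mono Ψ.c₁ := Ψ.mono_c₁ fun {W} (a b : W ⟶ f.obj.left)
      (hη : a ≫ ExtCat.homLeft (L.η₁.app f) = b ≫ ExtCat.homLeft (L.η₁.app f)) hφ' =>
    hσ a b (by rw [hf, reassoc_of% hη]) hφ'
      (by rw [ExtCat.homLeft_comp, reassoc_of% hη])
  have : IsIso Ψ.c₁ := hc₁.isIso_of_mono
  exact ⟨hφ, ExtCat.isPullback_of_isPullback_homLeft_homRight (L.η₁.naturality φ).symm
    Ψ.isPullback_top_of_isIso_c₁ Ψ.isPullback_bot_of_isIso_c₀⟩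

end LevelOne

end FiniteLimits

theorem statement_17_general {C : Type u} [Category.{v} C] [HasFiniteLimits C]
    {G : BirkhoffStructure C} (L : LevelOne G)
    (τ β : Sq C) (hτ : τ.IsDE) (hβ : β.IsDE)
    (hβ₁ : G.inB β.A₁) (hβ₂ : G.inB β.A₀) (hβ₃ : G.inB β.B₁)
    (Φ : SqHom τ β) (hΦ : Φ.IsDiscFib) :
    -- `τ` as the morphism `τ.left ⟶ τ.right` of `Ext C` is a trivial double covering ...
    TrivDoubleCov L (ExtCat.homMk' (hf := hτ.left) (hg := hτ.right) τ.top τ.bot τ.w) ∧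
    -- ... and so is `τ` in the other direction, as the morphism `τ.top ⟶ τ.bot`:
    TrivDoubleCov L (ExtCat.homMk' (hf := hτ.top) (hg := hτ.bot) τ.left τ.right τ.w.symm) :=
  ⟨L.trivDoubleCov_of_jointly_mono _ hτ (G.covering_of_inB hβ₁ hβ₂ hβ.left)
      (ExtCat.homMk' (hg := hβ.left) Φ.h₁₁ Φ.h₁₀ Φ.wA) fun _ _ hl ht hh => hΦ.2.ext hl ht hh,
    L.trivDoubleCov_of_jointly_mono _ hτ.transpose (G.covering_of_inB hβ₁ hβ₃ hβ.top)
      (ExtCat.homMk' (hg := hβ.top) Φ.h₁₁ Φ.h₀₁ Φ.wt) fun _ _ ht hl hh => hΦ.2.ext hl ht hh⟩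

/-- a symmetrically trivial double covering (a double extension `τ` admitting
a discrete fibration `τ ⟶ β` into a double extension `β` all of whose vertices lie in `B`)
is a trivial double covering in either of the two possible directions. -/
theorem statement_17 {C : Type u} [Category.{v} C] [HasFiniteLimits C] [BarrExact C]
    {G : BirkhoffStructure C} (L : LevelOne G)
    (τ β : Sq C) (hτ : τ.IsDE) (hβ : β.IsDE)
    (hβ₁ : G.inB β.A₁) (hβ₂ : G.inB β.A₀) (hβ₃ : G.inB β.B₁) (hβ₄ : G.inB β.B₀)
    (Φ : SqHom τ β) (hΦ : Φ.IsDiscFib) :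
    -- `τ` as the morphism `τ.left ⟶ τ.right` of `Ext C` is a trivial double covering ...
    TrivDoubleCov L (ExtCat.homMk' (hf := hτ.left) (hg := hτ.right) τ.top τ.bot τ.w) ∧
    -- ... and so is `τ` in the other direction, as the morphism `τ.top ⟶ τ.bot`:
    TrivDoubleCov L (ExtCat.homMk' (hf := hτ.top) (hg := hτ.bot) τ.left τ.right τ.w.symm) :=
  statement_17_general L τ β hτ hβ hβ₁ hβ₂ hβ₃ Φ hΦ

end Paper
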